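/- Let φ(n) = Σ_{σ ∈ S_n} (-1)^{d(σ)} with φ(0) = 1. Then for all n ≥ 3: φ(n)/n! = -(1/n) · Σ_{i=2}^{n-1} (φ(i-1)/(i-1)!) · (φ(n-i)/(n-i)!). -/

import Mathlib

/-!
Write a permutation of a finite set `s ⊆ ℕ` as a word. If `m` exceeds every element of `t`, a word
on `insert m t` is `a ++ m :: b` with `a` a word on some `T ⊆ t` and `b` a word on `t \ T`; its
descents are those of `a` and of `b`, plus one unless `b` is empty. So the signed descent sum
`D(insert m t)` equals `Σ_{T ⊆ t} ±D(T) D(t \ T)`, the sign being `+` only for `T = t`.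

By strong induction on the size, this recursion alone shows that `D(s)` depends only on `#s`, so
no relabelling argument is needed. Grouping the subsets `T` by size gives
`φ(m+1) = Σ_k ±(m choose k) φ(k) φ(m-k)`, whose terms `k = 0` and `k = m` cancel.
-/

def descList (l : List ℕ) : ℕ := (l.zip l.tail).countP fun p => decide (p.2 < p.1)

/-- The descent number of a permutation of `{1,…,n}`, read as the word `σ(1) … σ(n)`. -/
def permDesc {n : ℕ} (σ : Equiv.Perm (Fin n)) : ℕ :=
  descList ((List.finRange n).map fun i => ((σ i : Fin n) : ℕ))

/-- The signed descent sum `φ(n) = Σ_{σ ∈ S_n} (-1)^{d(σ)}`. -/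
def phi (n : ℕ) : ℤ := ∑ σ : Equiv.Perm (Fin n), (-1) ^ permDesc σ

open Finset

lemma descList_nil : descList [] = 0 := rfl

lemma descList_singleton (x : ℕ) : descList [x] = 0 := rfl

lemma descList_cons_cons (x y : ℕ) (l : List ℕ) :
    descList (x :: y :: l) = descList (y :: l) + if y < x then 1 else 0 := by
  simp [descList, List.countP_cons]

lemma descList_cons_of_forall_lt {m : ℕ} {l : List ℕ} (hl : ∀ x ∈ l, x < m) :
    descList (m :: l) = descList l + if l = [] then 0 else 1 := by
  cases l with
  | nil => rfl
  | cons y l => simp [descList_cons_cons, hl y]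

lemma descList_append_cons_of_forall_lt {m : ℕ} {a b : List ℕ} (ha : ∀ x ∈ a, x < m)
    (hb : ∀ x ∈ b, x < m) :
    descList (a ++ m :: b) = descList a + descList b + if b = [] then 0 else 1 := by
  induction a with
  | nil => rw [List.nil_append, descList_cons_of_forall_lt hb, descList_nil, zero_add]
  | cons x a ih =>
    cases a with
    | nil =>
      rw [List.singleton_append, descList_cons_cons, descList_cons_of_forall_lt hb,
        if_neg (ha x (List.mem_singleton_self x)).not_gt, descList_singleton]
      ring
    | cons y a =>
      simp only [List.cons_append, descList_cons_cons] at ih ⊢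
      rw [ih fun z hz => ha z (List.mem_cons_of_mem x hz)]
      ring

noncomputable def arrangements (s : Finset ℕ) : Finset (List ℕ) := s.toList.permutations.toFinset

lemma mem_arrangements {s : Finset ℕ} {w : List ℕ} :
    w ∈ arrangements s ↔ w.Nodup ∧ w.toFinset = s := by
  rw [arrangements, List.mem_toFinset, List.mem_permutations]
  refine ⟨fun h => ⟨h.nodup_iff.2 s.nodup_toList, ?_⟩, ?_⟩
  · rw [List.toFinset_eq_of_perm _ _ h, toList_toFinset]
  · rintro ⟨hw, rfl⟩
    exact List.perm_of_nodup_nodup_toFinset_eq hw (nodup_toList _) (by simp)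

lemma card_arrangements (s : Finset ℕ) : #(arrangements s) = (#s).factorial := by
  rw [arrangements, List.toFinset_card_of_nodup (List.nodup_permutations _ s.nodup_toList),
    List.length_permutations, length_toList]

def descSign (w : List ℕ) : ℤ := (-1) ^ descList w

noncomputable def descSum (s : Finset ℕ) : ℤ := ∑ w ∈ arrangements s, descSign w

lemma descSign_append_cons_of_forall_lt {m : ℕ} {a b : List ℕ} (ha : ∀ x ∈ a, x < m)
    (hb : ∀ x ∈ b, x < m) :
    descSign (a ++ m :: b) = (if b = [] then 1 else -1) * (descSign a * descSign b) := by
  rw [descSign, descList_append_cons_of_forall_lt ha hb]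
  split_ifs <;> simp [descSign, pow_add]

lemma append_cons_mem_arrangements_insert {m : ℕ} {t : Finset ℕ} (hm : m ∉ t) {a b : List ℕ} :
    a ++ m :: b ∈ arrangements (insert m t) ↔
      a.toFinset ⊆ t ∧ a.Nodup ∧ b ∈ arrangements (t \ a.toFinset) := by
  simp only [mem_arrangements, List.nodup_append, List.nodup_cons, Finset.ext_iff, subset_iff,
    List.mem_cons, ne_eq, forall_eq_or_imp, List.toFinset_append, List.toFinset_cons, union_insert,
    mem_insert, mem_union, List.mem_toFinset, mem_sdiff]
  grind

lemma sum_arrangements_insert {M : Type*} [AddCommMonoid M] {m : ℕ} {t : Finset ℕ} (hmt : m ∉ t)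
    (f : List ℕ → M) :
    ∑ w ∈ arrangements (insert m t), f w =
      ∑ T ∈ t.powerset, ∑ a ∈ arrangements T, ∑ b ∈ arrangements (t \ T), f (a ++ m :: b) := by
  have not_mem {T : Finset ℕ} (hT : T ⊆ t) {w : List ℕ} (hw : w ∈ arrangements T) : m ∉ w :=
    fun hm => hmt (hT ((mem_arrangements.1 hw).2 ▸ List.mem_toFinset.2 hm))
  rw [sum_congr rfl fun T _ => (sum_product' _ _ fun a b => f (a ++ m :: b)).symm, sum_sigma']
  symm
  refine sum_bij (fun x _ => x.2.1 ++ m :: x.2.2) ?_ ?_ ?_ fun _ _ => rfl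
  · rintro ⟨T, a, b⟩ h
    simp only [mem_sigma, mem_powerset, mem_product] at h
    obtain ⟨hT, ha, hb⟩ := h
    obtain ⟨ha', rfl⟩ := mem_arrangements.1 ha
    exact (append_cons_mem_arrangements_insert hmt).2 ⟨hT, ha', hb⟩
  · rintro ⟨T, a, b⟩ h ⟨T', a', b'⟩ h' heq
    simp only [mem_sigma, mem_powerset, mem_product] at h h'
    obtain ⟨rfl, -, rfl⟩ :=
      (List.append_cons_inj_of_notMem (not_mem h.1 h.2.1) (not_mem sdiff_subset h.2.2)).1 heq
    obtain rfl : T = T' := (mem_arrangements.1 h.2.1).2.symm.trans (mem_arrangements.1 h'.2.1).2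
    rfl
  · intro w hw
    have hmw : m ∈ w := by
      rw [← List.mem_toFinset, (mem_arrangements.1 hw).2]
      exact mem_insert_self m t
    obtain ⟨a, b, rfl⟩ := List.append_of_mem hmw
    obtain ⟨hT, ha, hb⟩ := (append_cons_mem_arrangements_insert hmt).1 hw
    exact ⟨⟨a.toFinset, a, b⟩, by simpa [mem_arrangements, hT, ha] using hb, rfl⟩

lemma descSum_insert_of_forall_lt {m : ℕ} {t : Finset ℕ} (hm : ∀ x ∈ t, x < m) :
    descSum (insert m t) =
      ∑ T ∈ t.powerset, (if T = t then 1 else -1) * (descSum T * descSum (t \ T)) := by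
  have lt_of_mem {T : Finset ℕ} (hT : T ⊆ t) {w : List ℕ} (hw : w ∈ arrangements T) :
      ∀ x ∈ w, x < m := fun x hx =>
    hm x (hT ((mem_arrangements.1 hw).2 ▸ List.mem_toFinset.2 hx))
  rw [descSum, sum_arrangements_insert fun h => (hm m h).false]
  refine sum_congr rfl fun T hT => ?_
  rw [mem_powerset] at hT
  rw [descSum, descSum, sum_mul_sum, mul_sum]
  refine sum_congr rfl fun a ha => ?_
  rw [mul_sum]
  refine sum_congr rfl fun b hb => ?_
  rw [descSign_append_cons_of_forall_lt (lt_of_mem hT ha) (lt_of_mem sdiff_subset hb)]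
  congr 2
  rw [← List.toFinset_eq_empty_iff, (mem_arrangements.1 hb).2, sdiff_eq_empty_iff_subset,
    Subset.antisymm_iff, and_iff_right hT]

lemma descSum_insert_eq_sum_range {m : ℕ} {t : Finset ℕ} (hm : ∀ x ∈ t, x < m)
    (ht : ∀ T ⊆ t, descSum T = descSum (range #T)) :
    descSum (insert m t) = ∑ k ∈ range (#t + 1), (#t).choose k •
      ((if k = #t then 1 else -1) * (descSum (range k) * descSum (range (#t - k)))) := by
  rw [descSum_insert_of_forall_lt hm, ← sum_powerset_apply_card]
  refine sum_congr rfl fun T hT => ?_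
  rw [mem_powerset] at hT
  rw [ht T hT, ht (t \ T) sdiff_subset, card_sdiff_of_subset hT]
  congr 1
  exact if_congr ⟨congrArg _, fun h => eq_of_subset_of_card_le hT h.ge⟩ rfl rfl

theorem descSum_eq_descSum_range_card (s : Finset ℕ) : descSum s = descSum (range #s) := by
  induction h : #s using Nat.strong_induction_on generalizing s with
  | _ n ih =>
  rcases s.eq_empty_or_nonempty with rfl | hs
  · rw [← h, card_empty, range_zero]
  set m := s.max' hs
  have hm : ∀ x ∈ s.erase m, x < m := fun x hx =>
    (le_max' s x (mem_of_mem_erase hx)).lt_of_ne (ne_of_mem_erase hx)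
  have hn : #(s.erase m) + 1 = n := by rw [card_erase_add_one (max'_mem s hs), h]
  have ih' (T : Finset ℕ) (hT : #T ≤ #(s.erase m)) : descSum T = descSum (range #T) :=
    ih _ (by omega) T rfl
  rw [← insert_erase (max'_mem s hs), ← hn, range_add_one,
    descSum_insert_eq_sum_range hm fun T hT => ih' T (card_le_card hT),
    descSum_insert_eq_sum_range (fun x => mem_range.1) fun T hT => ih' T ?_, card_range]
  simpa using card_le_card hT

lemma phi_eq_descSum_range (n : ℕ) : phi n = descSum (range n) := by
  let word (σ : Equiv.Perm (Fin n)) : List ℕ := List.ofFn fun i => (σ i : ℕ)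
  have word_mem (σ : Equiv.Perm (Fin n)) : word σ ∈ arrangements (range n) := by
    refine mem_arrangements.2 ⟨List.nodup_ofFn.2 fun i j h => σ.injective (Fin.val_injective h), ?_⟩
    ext x
    simp only [word, List.mem_toFinset, List.mem_ofFn, mem_range]
    exact ⟨fun ⟨i, hi⟩ => hi ▸ (σ i).isLt, fun hx => ⟨σ.symm ⟨x, hx⟩, by simp⟩⟩
  have word_inj : Function.Injective word := fun σ τ h =>
    Equiv.ext fun i => Fin.val_injective (congrFun (List.ofFn_injective h) i)
  refine sum_nbij word (fun σ _ => word_mem σ) word_inj.injOn ?_ fun σ _ => by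
    rw [permDesc, ← List.ofFn_eq_map]; rfl
  refine surjOn_of_injOn_of_card_le word (fun σ _ => word_mem σ) word_inj.injOn ?_
  rw [card_arrangements, card_range, card_univ, Fintype.card_perm, Fintype.card_fin]

lemma phi_succ (m : ℕ) : phi (m + 1) = ∑ k ∈ range (m + 1), m.choose k •
    ((if k = m then 1 else -1) * (phi k * phi (m - k))) := by
  simp only [phi_eq_descSum_range]
  conv_lhs => rw [range_add_one]
  rw [descSum_insert_eq_sum_range (fun x => mem_range.1)
    fun T _ => descSum_eq_descSum_range_card T, card_range]

lemma phi_add_two (j : ℕ) : phi (j + 2) =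
    -∑ k ∈ range j, ((j + 1).choose (k + 1) : ℤ) * phi (k + 1) * phi (j - k) := by
  have middle (k : ℕ) (hk : k ∈ range j) : (j + 1).choose (k + 1) •
      ((if k + 1 = j + 1 then 1 else -1) * (phi (k + 1) * phi (j + 1 - (k + 1)))) =
      -(((j + 1).choose (k + 1) : ℤ) * phi (k + 1) * phi (j - k)) := by
    rw [if_neg (by have := mem_range.1 hk; omega), nsmul_eq_mul, Nat.add_sub_add_right]
    ring
  rw [phi_succ, sum_range_succ, sum_range_succ', sum_congr rfl middle, sum_neg_distrib,
    if_neg (Nat.succ_ne_zero j).symm, if_pos rfl]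
  simp only [Nat.choose_zero_right, Nat.choose_self, one_smul, Nat.sub_zero, Nat.sub_self]
  ring

/-- the recursion `φ(n)/n! = -(1/n) Σ_{i=2}^{n-1} φ(i-1)/(i-1)! · φ(n-i)/(n-i)!`
for all `n ≥ 3`. -/
theorem phi_recursion (n : ℕ) (hn : 3 ≤ n) :
    (phi n : ℚ) / n.factorial
      = -(1 / (n : ℚ)) * ∑ i ∈ Finset.Icc 2 (n - 1),
          ((phi (i - 1) : ℚ) / (i - 1).factorial) * ((phi (n - i) : ℚ) / (n - i).factorial) := by
  obtain ⟨j, rfl⟩ : ∃ j, n = j + 2 := ⟨n - 2, by omega⟩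
  rw [show j + 2 - 1 = j + 1 from rfl, ← Ico_add_one_right_eq_Icc, sum_Ico_eq_sum_range,
    phi_add_two, show j + 1 + 1 - 2 = j from rfl, Nat.factorial_succ (j + 1)]
  push_cast
  rw [neg_div, sum_div, neg_mul, mul_sum, neg_inj]
  refine sum_congr rfl fun k hk => ?_
  have hkj : k + 1 ≤ j + 1 := by have := mem_range.1 hk; omega
  have hfac := Nat.choose_mul_factorial_mul_factorial hkj
  have hchoose : ((j + 1).choose (k + 1) : ℚ) ≠ 0 := by exact_mod_cast (Nat.choose_pos hkj).ne'
  rw [Nat.add_sub_add_right] at hfac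
  rw [show 2 + k - 1 = k + 1 by omega, show j + 2 - (2 + k) = j - k by omega, ← hfac]
  push_cast
  field_simp
  ring
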